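/- arXiv:math/0609755 — 5 statements merged into one kernel-verified Lean document; each statement's English description precedes it below -/
import Mathlib

section
/- Let G be a graph with a perfect matching and |V(G)| ≥ 2k + 4. If for every edge e of G the graph G − V(e) is k-extendable, then G is (k+1)-extendable. -/
/-- `G` is `k`-extendable: `|V(G)|` is even, `|V(G)| ≥ 2k + 2`, `G` has a `k`-matching, and
every `k`-matching of `G` extends to a perfect matching of `G`. -/
def SimpleGraph.KExtendable {V : Type*} [Finite V] (G : SimpleGraph V) (k : ℕ) : Prop :=
  Even (Nat.card V) ∧ 2 * k + 2 ≤ Nat.card V ∧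
  (∃ M : G.Subgraph, M.IsMatching ∧ M.edgeSet.ncard = k) ∧
  ∀ M : G.Subgraph, M.IsMatching → M.edgeSet.ncard = k →
    ∃ F : G.Subgraph, M ≤ F ∧ F.IsPerfectMatching

namespace KExtAux

open SimpleGraph

variable {V : Type*} (G : SimpleGraph V) (u v : V)

/-- Lift a subgraph of `G - {u,v}` to a subgraph of `G`, adding the edge `uv`. -/
def lift (hadj : G.Adj u v) (M' : (G.induce ({u, v}ᶜ : Set V)).Subgraph) : G.Subgraph where
  verts := {u, v} ∪ Subtype.val '' M'.verts
  Adj a b := (a = u ∧ b = v) ∨ (a = v ∧ b = u) ∨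
    ∃ (ha : a ∈ ({u, v}ᶜ : Set V)) (hb : b ∈ ({u, v}ᶜ : Set V)), M'.Adj ⟨a, ha⟩ ⟨b, hb⟩
  adj_sub := by
    rintro a b (⟨rfl, rfl⟩ | ⟨rfl, rfl⟩ | ⟨ha, hb, hab⟩)
    · exact hadj
    · exact hadj.symm
    · exact M'.adj_sub hab
  edge_vert := by
    rintro a b (⟨rfl, rfl⟩ | ⟨rfl, rfl⟩ | ⟨ha, hb, hab⟩)
    · exact Or.inl (Or.inl rfl)
    · exact Or.inl (Or.inr rfl)
    · exact Or.inr ⟨⟨a, ha⟩, M'.edge_vert hab, rfl⟩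
  symm := ⟨by
    rintro a b (⟨rfl, rfl⟩ | ⟨rfl, rfl⟩ | ⟨ha, hb, hab⟩)
    · exact Or.inr (Or.inl ⟨rfl, rfl⟩)
    · exact Or.inl ⟨rfl, rfl⟩
    · exact Or.inr (Or.inr ⟨hb, ha, hab.symm⟩)⟩

/-- Restrict a subgraph of `G` to `G - {u,v}`. -/
@[reducible]
def restrict (M : G.Subgraph) : (G.induce ({u, v}ᶜ : Set V)).Subgraph where
  verts := {x | (x : V) ∈ M.verts}
  Adj a b := M.Adj a b
  adj_sub h := M.adj_sub h
  edge_vert h := M.edge_vert h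
  symm := ⟨fun a b h => h.symm⟩

variable {G u v}

lemma lift_isMatching (hadj : G.Adj u v)
    {M' : (G.induce ({u, v}ᶜ : Set V)).Subgraph} (hM' : M'.IsMatching) :
    (lift G u v hadj M').IsMatching := by
  have hne : u ≠ v := hadj.ne
  rintro x (hx | ⟨x', hx', rfl⟩)
  · rcases hx with rfl | rfl
    · refine ⟨v, Or.inl ⟨rfl, rfl⟩, ?_⟩
      rintro y (⟨-, rfl⟩ | ⟨h1, rfl⟩ | ⟨ha, hb, hab⟩)
      · rfl
      · exact absurd h1 hne
      · exact absurd (Or.inl rfl) ha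
    · refine ⟨u, Or.inr (Or.inl ⟨rfl, rfl⟩), ?_⟩
      rintro y (⟨h1, rfl⟩ | ⟨-, rfl⟩ | ⟨ha, hb, hab⟩)
      · exact absurd h1 hne.symm
      · rfl
      · exact absurd (Or.inr rfl) ha
  · obtain ⟨y', hy', huniq⟩ := hM' hx'
    refine ⟨y', Or.inr (Or.inr ⟨x'.2, y'.2, by simpa using hy'⟩), ?_⟩
    rintro y (⟨h1, rfl⟩ | ⟨h1, rfl⟩ | ⟨ha, hb, hab⟩)
    · exact absurd (Or.inl h1) x'.2
    · exact absurd (Or.inr h1) x'.2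
    · have : (⟨(x' : V), ha⟩ : ({u, v}ᶜ : Set V)) = x' := Subtype.ext rfl
      rw [this] at hab
      have := huniq ⟨y, hb⟩ hab
      exact congrArg Subtype.val this

lemma lift_isSpanning (hadj : G.Adj u v)
    {M' : (G.induce ({u, v}ᶜ : Set V)).Subgraph} (hM' : M'.IsSpanning) :
    (lift G u v hadj M').IsSpanning := by
  intro x
  by_cases hx : x ∈ ({u, v} : Set V)
  · exact Or.inl hx
  · exact Or.inr ⟨⟨x, hx⟩, hM' _, rfl⟩

lemma sym2_not_mem (hadj : G.Adj u v)
    (E : Set (Sym2 ({u, v}ᶜ : Set V))) :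
    s(u, v) ∉ Sym2.map Subtype.val '' E := by
  rintro ⟨e, he, heq⟩
  induction e using Sym2.ind with
  | _ x y =>
    simp only [Sym2.map_pair_eq, Sym2.eq, Sym2.rel_iff', Prod.mk.injEq, Prod.swap_prod_mk] at heq
    rcases heq with ⟨h1, -⟩ | ⟨h1, -⟩
    · exact x.2 (by simp [h1])
    · exact x.2 (by simp [h1])

lemma lift_edgeSet (hadj : G.Adj u v)
    (M' : (G.induce ({u, v}ᶜ : Set V)).Subgraph) :
    (lift G u v hadj M').edgeSet = insert s(u, v) (Sym2.map Subtype.val '' M'.edgeSet) := by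
  ext e
  induction e using Sym2.ind with
  | _ a b =>
    simp only [SimpleGraph.Subgraph.mem_edgeSet, Set.mem_insert_iff, Set.mem_image]
    constructor
    · rintro (⟨rfl, rfl⟩ | ⟨rfl, rfl⟩ | ⟨ha, hb, hab⟩)
      · exact Or.inl rfl
      · exact Or.inl (Sym2.eq_swap)
      · exact Or.inr ⟨s(⟨a, ha⟩, ⟨b, hb⟩), hab, rfl⟩
    · rintro (heq | ⟨e', he', heq⟩)
      · simp only [Sym2.eq, Sym2.rel_iff', Prod.mk.injEq, Prod.swap_prod_mk] at heq
        rcases heq with ⟨h1, h2⟩ | ⟨h1, h2⟩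
        · exact Or.inl ⟨h1, h2⟩
        · exact Or.inr (Or.inl ⟨h1, h2⟩)
      · induction e' using Sym2.ind with
        | _ x y =>
          simp only [Sym2.map_pair_eq, Sym2.eq, Sym2.rel_iff', Prod.mk.injEq, Prod.swap_prod_mk] at heq
          rcases heq with ⟨h1, h2⟩ | ⟨h1, h2⟩
          · subst h1; subst h2
            exact Or.inr (Or.inr ⟨x.2, y.2, by simpa using he'⟩)
          · subst h1; subst h2
            exact Or.inr (Or.inr ⟨y.2, x.2, by simpa using he'.symm⟩)

lemma lift_edgeSet_ncard [Finite V] (hadj : G.Adj u v)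
    (M' : (G.induce ({u, v}ᶜ : Set V)).Subgraph) :
    (lift G u v hadj M').edgeSet.ncard = M'.edgeSet.ncard + 1 := by
  rw [lift_edgeSet hadj M',
    Set.ncard_insert_of_notMem (sym2_not_mem hadj _) (Set.toFinite _),
    Set.ncard_image_of_injective _ (Sym2.map.injective Subtype.val_injective)]

lemma restrict_isMatching {M : G.Subgraph} (hM : M.IsMatching) (huv : M.Adj u v) :
    (restrict G u v M).IsMatching := by
  have hkey : ∀ w : V, w ∈ ({u, v} : Set V) → ∀ z : V, M.Adj w z →
      z ∈ ({u, v} : Set V) := by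
    rintro w (rfl | rfl) z hz
    · have := (hM (M.edge_vert huv)).unique hz huv
      exact Or.inr this
    · have := (hM (M.edge_vert huv.symm)).unique hz huv.symm
      exact Or.inl this
  rintro ⟨x, hx⟩ hxv
  obtain ⟨w, hw, huniq⟩ := hM hxv
  have hws : w ∈ ({u, v}ᶜ : Set V) := fun hwm => hx (hkey w hwm x hw.symm)
  refine ⟨⟨w, hws⟩, hw, ?_⟩
  rintro ⟨y, hy⟩ hadjy
  exact Subtype.ext (huniq y hadjy)

lemma restrict_edgeSet_eq {M : G.Subgraph} (hM : M.IsMatching) (huv : M.Adj u v) :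
    M.edgeSet = insert s(u, v) (Sym2.map Subtype.val '' (restrict G u v M).edgeSet) := by
  have hkey : ∀ w : V, w ∈ ({u, v} : Set V) → ∀ z : V, M.Adj w z →
      z ∈ ({u, v} : Set V) := by
    rintro w (rfl | rfl) z hz
    · exact Or.inr ((hM (M.edge_vert huv)).unique hz huv)
    · exact Or.inl ((hM (M.edge_vert huv.symm)).unique hz huv.symm)
  ext e
  induction e using Sym2.ind with
  | _ a b =>
    simp only [SimpleGraph.Subgraph.mem_edgeSet, Set.mem_insert_iff, Set.mem_image]
    constructor
    · intro hab
      by_cases ha : a ∈ ({u, v} : Set V)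
      · rcases ha with rfl | rfl
        · have : b = v := (hM (M.edge_vert huv)).unique hab huv
          exact Or.inl (by rw [this])
        · have : b = u := (hM (M.edge_vert huv.symm)).unique hab huv.symm
          exact Or.inl (by rw [this, Sym2.eq_swap])
      · have hb : b ∉ ({u, v} : Set V) := fun hbm => ha (hkey b hbm a hab.symm)
        exact Or.inr ⟨s(⟨a, ha⟩, ⟨b, hb⟩), hab, rfl⟩
    · rintro (heq | ⟨e', he', heq⟩)
      · simp only [Sym2.eq, Sym2.rel_iff', Prod.mk.injEq, Prod.swap_prod_mk] at heq
        rcases heq with ⟨rfl, rfl⟩ | ⟨rfl, rfl⟩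
        · exact huv
        · exact huv.symm
      · induction e' using Sym2.ind with
        | _ x y =>
          simp only [Sym2.map_pair_eq, Sym2.eq, Sym2.rel_iff', Prod.mk.injEq, Prod.swap_prod_mk] at heq
          rcases heq with ⟨h1, h2⟩ | ⟨h1, h2⟩
          · subst h1; subst h2; exact he'
          · subst h1; subst h2; exact he'.symm

lemma le_lift (hadj : G.Adj u v) {M : G.Subgraph} (hM : M.IsMatching) (huv : M.Adj u v)
    {F' : (G.induce ({u, v}ᶜ : Set V)).Subgraph}
    (hle : restrict G u v M ≤ F') : M ≤ lift G u v hadj F' := by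
  have hkey : ∀ w : V, w ∈ ({u, v} : Set V) → ∀ z : V, M.Adj w z →
      z ∈ ({u, v} : Set V) := by
    rintro w (rfl | rfl) z hz
    · exact Or.inr ((hM (M.edge_vert huv)).unique hz huv)
    · exact Or.inl ((hM (M.edge_vert huv.symm)).unique hz huv.symm)
  constructor
  · intro x hx
    by_cases hxm : x ∈ ({u, v} : Set V)
    · exact Or.inl hxm
    · exact Or.inr ⟨⟨x, hxm⟩, hle.1 hx, rfl⟩
  · intro a b hab
    by_cases ha : a ∈ ({u, v} : Set V)
    · rcases ha with rfl | rfl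
      · exact Or.inl ⟨rfl, (hM (M.edge_vert huv)).unique hab huv⟩
      · exact Or.inr (Or.inl ⟨rfl, (hM (M.edge_vert huv.symm)).unique hab huv.symm⟩)
    · have hb : b ∉ ({u, v} : Set V) := fun hbm => ha (hkey b hbm a hab.symm)
      exact Or.inr (Or.inr ⟨ha, hb, hle.2 hab⟩)

end KExtAux

open KExtAux in
/-- If `G` has a perfect matching, `|V(G)| ≥ 2k + 4`, and `G - V(e)` is `k`-extendable for
every edge `e` of `G`, then `G` is `(k+1)`-extendable. -/
theorem kExtendable_succ_of_deleted_edges {V : Type*} [Finite V]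
    (G : SimpleGraph V) (k : ℕ)
    (hpm : ∃ M : G.Subgraph, M.IsPerfectMatching)
    (hcard : 2 * k + 4 ≤ Nat.card V)
    (h : ∀ u v : V, G.Adj u v →
      (G.induce ({u, v}ᶜ : Set V)).KExtendable k) :
    G.KExtendable (k + 1) := by
  obtain ⟨F0, hF0⟩ := hpm
  have : Fintype V := Fintype.ofFinite V
  have heven : Even (Nat.card V) := by
    rw [Nat.card_eq_fintype_card]
    exact hF0.even_card
  have hne : Nonempty V := by
    have : 0 < Nat.card V := by omega
    exact (Nat.card_pos_iff.mp this).1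
  -- get some edge of G
  obtain ⟨x⟩ := hne
  obtain ⟨w, hw, -⟩ := hF0.1 (hF0.2 x)
  have hxw : G.Adj x w := F0.adj_sub hw
  refine ⟨heven, by omega, ?_, ?_⟩
  · -- existence of a (k+1)-matching
    obtain ⟨-, -, ⟨M', hM', hMcard⟩, -⟩ := h x w hxw
    exact ⟨lift G x w hxw M', lift_isMatching hxw hM', by
      rw [lift_edgeSet_ncard hxw M', hMcard]⟩
  · -- every (k+1)-matching extends
    intro M hM hMcard
    have hES : M.edgeSet.Nonempty := by
      rw [← Set.ncard_pos (Set.toFinite _), hMcard]; omega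
    obtain ⟨e, he⟩ := hES
    induction e using Sym2.ind with
    | _ a b =>
      rw [SimpleGraph.Subgraph.mem_edgeSet] at he
      have hab : G.Adj a b := M.adj_sub he
      obtain ⟨-, -, -, hext⟩ := h a b hab
      have hres : (restrict G a b M).edgeSet.ncard = k := by
        have := restrict_edgeSet_eq hM he
        rw [this, Set.ncard_insert_of_notMem (sym2_not_mem hab _) (Set.toFinite _),
          Set.ncard_image_of_injective _ (Sym2.map.injective Subtype.val_injective)] at hMcard
        omega
      obtain ⟨F', hleF', hF'⟩ := hext (restrict G a b M) (restrict_isMatching hM he) hres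
      refine ⟨lift G a b hab F', le_lift hab hM he hleF', ?_, ?_⟩
      · exact lift_isMatching hab hF'.1
      · exact lift_isSpanning hab hF'.2
end

section
/- If G is (n,k)-extendable with n ≥ 2, then G is (n−2, k+1)-extendable. -/
/-- `G` is `(n,k)`-extendable: `n + 2k ≤ |V(G)| - 2`, `|V(G)| - n` is even, and for every
set `S` of `n` vertices, `G - S` contains a `k`-matching and every `k`-matching of `G - S`
extends to a perfect matching of `G - S`. -/
def SimpleGraph.NKExtendable {V : Type*} [Finite V] (G : SimpleGraph V) (n k : ℕ) : Prop :=
  n + 2 * k ≤ Nat.card V - 2 ∧ Even (Nat.card V - n) ∧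
  ∀ S : Set V, S.ncard = n →
    (∃ M : G.Subgraph, M.IsMatching ∧ Disjoint M.verts S ∧ M.edgeSet.ncard = k) ∧
    ∀ M : G.Subgraph, M.IsMatching → Disjoint M.verts S → M.edgeSet.ncard = k →
      ∃ F : G.Subgraph, M ≤ F ∧ F.IsMatching ∧ F.verts = Sᶜ

open SimpleGraph Subgraph in
/-- For a matching, the number of vertices is twice the number of edges. -/
lemma isMatching_verts_ncard {V : Type*} [Finite V] {G : SimpleGraph V} {M : G.Subgraph}
    (hM : M.IsMatching) : M.verts.ncard = 2 * M.edgeSet.ncard := by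
  classical
  haveI := Fintype.ofFinite V
  rw [Set.ncard_eq_toFinset_card', Set.ncard_eq_toFinset_card']
  set f : V → Sym2 V := fun v =>
    if h : v ∈ M.verts then (hM.toEdge ⟨v, h⟩ : Sym2 V) else s(v, v) with hf
  have hmap : ∀ v ∈ M.verts.toFinset, f v ∈ M.edgeSet.toFinset := by
    intro v hv
    rw [Set.mem_toFinset] at hv ⊢
    simp only [hf, dif_pos hv]
    exact (hM.toEdge ⟨v, hv⟩).2
  rw [Finset.card_eq_sum_card_fiberwise hmap]
  have key : ∀ e ∈ M.edgeSet.toFinset,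
      (M.verts.toFinset.filter (fun v => f v = e)).card = 2 := by
    intro e he
    rw [Set.mem_toFinset] at he
    revert he
    induction e using Sym2.ind with
    | _ a b =>
      intro hadj
      have hadj' : M.Adj a b := hadj
      have hane : a ≠ b := (M.adj_sub hadj').ne
      have hfilter : M.verts.toFinset.filter (fun v => f v = s(a, b)) = {a, b} := by
        ext v
        simp only [Finset.mem_filter, Set.mem_toFinset, Finset.mem_insert, Finset.mem_singleton]
        constructor
        · rintro ⟨hv, hfv⟩
          simp only [hf, dif_pos hv] at hfv
          have hmem : v ∈ (hM.toEdge ⟨v, hv⟩ : Sym2 V) := by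
            simp [SimpleGraph.Subgraph.IsMatching.toEdge]
          rw [hfv] at hmem
          simpa [Sym2.mem_iff] using hmem
        · rintro (rfl | rfl)
          · have hv : v ∈ M.verts := M.edge_vert hadj'
            refine ⟨hv, ?_⟩
            simp only [hf, dif_pos hv]
            exact congrArg Subtype.val (hM.toEdge_eq_of_adj hadj')
          · have hv : v ∈ M.verts := M.edge_vert hadj'.symm
            refine ⟨hv, ?_⟩
            simp only [hf, dif_pos hv]
            have := congrArg Subtype.val (hM.toEdge_eq_of_adj hadj'.symm)
            rw [this]
            exact Sym2.eq_swap
      rw [hfilter, Finset.card_insert_of_notMem (by simpa using hane), Finset.card_singleton]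
  rw [Finset.sum_congr rfl key, Finset.sum_const, smul_eq_mul, mul_comm]

/-- If `G` is `(n,k)`-extendable with `n ≥ 2`, then `G` is `(n-2, k+1)`-extendable. -/
theorem nkExtendable_sub_two_add_one {V : Type*} [Finite V]
    (G : SimpleGraph V) (n k : ℕ) (hn : 2 ≤ n)
    (h : G.NKExtendable n k) :
    G.NKExtendable (n - 2) (k + 1) := by
  classical
  obtain ⟨h1, h2, h3⟩ := h
  have hcard : n + 2 * k + 2 ≤ Nat.card V := by omega
  refine ⟨by omega, ?_, ?_⟩
  · obtain ⟨m, hm⟩ := h2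
    exact ⟨m + 1, by omega⟩
  intro S hS
  constructor
  · -- existence of a (k+1)-matching disjoint from S
    -- pick two distinct vertices outside S
    have hSc : (Sᶜ).ncard = Nat.card V - (n - 2) := by
      have := Set.ncard_add_ncard_compl S
      omega
    have h2lt : 1 < (Sᶜ).ncard := by omega
    obtain ⟨x, y, hx, hy, hxy⟩ := (Set.one_lt_ncard_iff (Set.toFinite _)).mp h2lt
    set S' : Set V := insert x (insert y S) with hS'
    have hxS : x ∉ S := hx
    have hyS : y ∉ S := hy
    have hS'card : S'.ncard = n := by
      rw [hS', Set.ncard_insert_of_notMem (by simp [hxy, hxS]) (Set.toFinite _),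
        Set.ncard_insert_of_notMem hyS (Set.toFinite _), hS]
      omega
    obtain ⟨⟨M, hM, hMd, hMk⟩, hext⟩ := h3 S' hS'card
    obtain ⟨F, hMF, hF, hFverts⟩ := hext M hM hMd hMk
    -- F has at least k+1 edges
    have hFcard : F.verts.ncard = Nat.card V - n := by
      rw [hFverts]
      have := Set.ncard_add_ncard_compl S'
      omega
    have hFedge : k + 1 ≤ F.edgeSet.ncard := by
      have := isMatching_verts_ncard hF
      omega
    have hMsub : M.edgeSet ⊆ F.edgeSet := SimpleGraph.Subgraph.edgeSet_mono hMF
    -- find an edge of F not in M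
    have hne : ¬ F.edgeSet ⊆ M.edgeSet := by
      intro hsub
      have : F.edgeSet = M.edgeSet := Set.Subset.antisymm hsub hMsub
      rw [this, hMk] at hFedge
      omega
    obtain ⟨e, heF, heM⟩ := Set.not_subset.mp hne
    revert heF heM
    induction e using Sym2.ind with
    | _ a b =>
      intro heF heM
      have hFab : F.Adj a b := heF
      have hGab : G.Adj a b := F.adj_sub hFab
      have haM : a ∉ M.verts := by
        intro haM
        obtain ⟨w, hw, huniq⟩ := hM haM
        have hFaw : F.Adj a w := hMF.2 hw
        obtain ⟨w', hw', huniq'⟩ := hF (F.edge_vert hFab)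
        have hb : b = w' := huniq' b hFab
        have hww : w = w' := huniq' w hFaw
        exact heM (by rw [SimpleGraph.Subgraph.mem_edgeSet]; rwa [hb, ← hww])
      have hbM : b ∉ M.verts := by
        intro hbM
        obtain ⟨w, hw, huniq⟩ := hM hbM
        have hFbw : F.Adj b w := hMF.2 hw
        obtain ⟨w', hw', huniq'⟩ := hF (F.edge_vert hFab.symm)
        have ha : a = w' := huniq' a hFab.symm
        have hww : w = w' := huniq' w hFbw
        have : M.Adj b a := by rwa [ha, ← hww]
        exact heM (by rw [SimpleGraph.Subgraph.mem_edgeSet]; exact this.symm)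
      have haS : a ∉ S := by
        have : a ∈ F.verts := F.edge_vert hFab
        rw [hFverts] at this
        simp only [hS', Set.mem_compl_iff, Set.mem_insert_iff] at this
        tauto
      have hbS : b ∉ S := by
        have : b ∈ F.verts := F.edge_vert hFab.symm
        rw [hFverts] at this
        simp only [hS', Set.mem_compl_iff, Set.mem_insert_iff] at this
        tauto
      refine ⟨M ⊔ G.subgraphOfAdj hGab, ?_, ?_, ?_⟩
      · refine hM.sup (SimpleGraph.Subgraph.IsMatching.subgraphOfAdj hGab) ?_
        rw [hM.support_eq_verts, SimpleGraph.support_subgraphOfAdj]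
        rw [Set.disjoint_right]
        intro v hv
        simp only [Set.mem_insert_iff, Set.mem_singleton_iff] at hv
        rcases hv with rfl | rfl <;> assumption
      · rw [SimpleGraph.Subgraph.verts_sup]
        rw [Set.disjoint_union_left]
        constructor
        · rw [hS'] at hMd
          exact hMd.mono_right (by intro v hv; simp [hv])
        · simp only [SimpleGraph.subgraphOfAdj_verts]
          rw [Set.disjoint_left]
          intro v hv
          simp only [Set.mem_insert_iff, Set.mem_singleton_iff] at hv
          rcases hv with rfl | rfl <;> assumption
      · rw [SimpleGraph.Subgraph.edgeSet_sup, SimpleGraph.edgeSet_subgraphOfAdj,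
          Set.union_singleton, Set.ncard_insert_of_notMem heM (Set.toFinite _), hMk]
  · -- extension of (k+1)-matchings
    intro M hM hMd hMk
    -- pick an edge of M
    have hne : M.edgeSet.Nonempty := by
      apply Set.nonempty_of_ncard_ne_zero
      omega
    obtain ⟨e, he⟩ := hne
    revert he
    induction e using Sym2.ind with
    | _ a b =>
      intro he
      have hab : M.Adj a b := he
      have hGab : G.Adj a b := M.adj_sub hab
      have hane : a ≠ b := hGab.ne
      have haM : a ∈ M.verts := M.edge_vert hab
      have hbM : b ∈ M.verts := M.edge_vert hab.symm
      have haS : a ∉ S := Set.disjoint_left.mp hMd haM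
      have hbS : b ∉ S := Set.disjoint_left.mp hMd hbM
      set S' : Set V := insert a (insert b S) with hS'
      have hS'card : S'.ncard = n := by
        rw [hS', Set.ncard_insert_of_notMem (by simp [hane, haS]) (Set.toFinite _),
          Set.ncard_insert_of_notMem hbS (Set.toFinite _), hS]
        omega
      set M' : G.Subgraph := M.deleteVerts {a, b} with hM'
      have hM'verts : M'.verts = M.verts \ {a, b} := rfl
      -- M' is a matching
      have hM'match : M'.IsMatching := by
        intro v hv
        rw [hM'verts, Set.mem_diff] at hv
        obtain ⟨hvM, hvab⟩ := hv
        obtain ⟨w, hw, huniq⟩ := hM hvM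
        have hwab : w ∉ ({a, b} : Set V) := by
          intro hmem
          simp only [Set.mem_insert_iff, Set.mem_singleton_iff] at hmem
          rcases hmem with hwa | hwb
          · have hav : M.Adj a v := by rw [← hwa]; exact hw.symm
            obtain ⟨u, hu, huniq'⟩ := hM haM
            have h1 : v = u := huniq' v hav
            have h2 : b = u := huniq' b hab
            exact hvab (by rw [h1.trans h2.symm]; exact Set.mem_insert_of_mem _ rfl)
          · have hbv : M.Adj b v := by rw [← hwb]; exact hw.symm
            obtain ⟨u, hu, huniq'⟩ := hM hbM
            have h1 : v = u := huniq' v hbv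
            have h2 : a = u := huniq' a hab.symm
            exact hvab (by rw [h1.trans h2.symm]; exact Set.mem_insert _ _)
        refine ⟨w, ?_, ?_⟩
        · simp only [hM', SimpleGraph.Subgraph.deleteVerts_adj]
          exact ⟨hvM, hvab, M.edge_vert hw.symm, hwab, hw⟩
        · intro y hy
          simp only [hM', SimpleGraph.Subgraph.deleteVerts_adj] at hy
          exact huniq y hy.2.2.2.2
      -- edge set of M'
      have hM'edge : M'.edgeSet = M.edgeSet \ {s(a, b)} := by
        ext e'
        induction e' using Sym2.ind with
        | _ u v =>
          simp only [hM', SimpleGraph.Subgraph.mem_edgeSet, Set.mem_diff, Set.mem_singleton_iff,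
            SimpleGraph.Subgraph.deleteVerts_adj]
          constructor
          · rintro ⟨huM, hua, hvM, hva, huv⟩
            refine ⟨huv, ?_⟩
            intro heq
            rw [Sym2.eq_iff] at heq
            rcases heq with ⟨h1, h2⟩ | ⟨h1, h2⟩
            · exact hua (by rw [h1]; exact Set.mem_insert _ _)
            · exact hua (by rw [h1]; exact Set.mem_insert_of_mem _ rfl)
          · rintro ⟨huv, hne'⟩
            have huM : u ∈ M.verts := M.edge_vert huv
            have hvM : v ∈ M.verts := M.edge_vert huv.symm
            refine ⟨huM, ?_, hvM, ?_, huv⟩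
            · intro hmem
              simp only [Set.mem_insert_iff, Set.mem_singleton_iff] at hmem
              rcases hmem with hua | hub
              · obtain ⟨w, hw, huniq'⟩ := hM haM
                have h1 : v = w := huniq' v (by rw [← hua]; exact huv)
                have h2 : b = w := huniq' b hab
                exact hne' (by rw [hua, h1.trans h2.symm])
              · obtain ⟨w, hw, huniq'⟩ := hM hbM
                have h1 : v = w := huniq' v (by rw [← hub]; exact huv)
                have h2 : a = w := huniq' a hab.symm
                rw [hub, h1.trans h2.symm] at hne'
                exact hne' (Sym2.eq_swap)
            · intro hmem
              simp only [Set.mem_insert_iff, Set.mem_singleton_iff] at hmem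
              rcases hmem with hva | hvb
              · obtain ⟨w, hw, huniq'⟩ := hM haM
                have h1 : u = w := huniq' u (by rw [← hva]; exact huv.symm)
                have h2 : b = w := huniq' b hab
                rw [hva, h1.trans h2.symm] at hne'
                exact hne' (Sym2.eq_swap)
              · obtain ⟨w, hw, huniq'⟩ := hM hbM
                have h1 : u = w := huniq' u (by rw [← hvb]; exact huv.symm)
                have h2 : a = w := huniq' a hab.symm
                exact hne' (by rw [hvb, h1.trans h2.symm])
      have hM'card : M'.edgeSet.ncard = k := by
        rw [hM'edge, Set.ncard_diff_singleton_of_mem he, hMk]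
        omega
      have hM'disj : Disjoint M'.verts S' := by
        rw [hM'verts, hS', Set.disjoint_left]
        intro v hv hvS'
        simp only [Set.mem_insert_iff] at hvS'
        rcases hvS' with rfl | rfl | hvS
        · exact hv.2 (Set.mem_insert _ _)
        · exact hv.2 (Set.mem_insert_of_mem _ rfl)
        · exact Set.disjoint_left.mp hMd hv.1 hvS
      obtain ⟨_, hext⟩ := h3 S' hS'card
      obtain ⟨F, hM'F, hF, hFverts⟩ := hext M' hM'match hM'disj hM'card
      -- the final matching
      refine ⟨F ⊔ G.subgraphOfAdj hGab, ?_, ?_, ?_⟩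
      · constructor
        · intro v hv
          rw [SimpleGraph.Subgraph.verts_sup, Set.mem_union]
          by_cases hvab : v ∈ ({a, b} : Set V)
          · right; simpa using hvab
          · left
            exact hM'F.1 ⟨hv, hvab⟩
        · intro u v huv
          by_cases huab : u ∈ ({a, b} : Set V)
          · right
            simp only [Set.mem_insert_iff, Set.mem_singleton_iff] at huab
            rcases huab with hua | hub
            · obtain ⟨w, hw, huniq'⟩ := hM haM
              have h1 : v = w := huniq' v (by rw [← hua]; exact huv)
              have h2 : b = w := huniq' b hab
              rw [hua, h1.trans h2.symm]
              simp
            · obtain ⟨w, hw, huniq'⟩ := hM hbM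
              have h1 : v = w := huniq' v (by rw [← hub]; exact huv)
              have h2 : a = w := huniq' a hab.symm
              rw [hub, h1.trans h2.symm]
              simp
          · by_cases hvab : v ∈ ({a, b} : Set V)
            · exfalso
              simp only [Set.mem_insert_iff, Set.mem_singleton_iff] at hvab
              rcases hvab with hva | hvb
              · obtain ⟨w, hw, huniq'⟩ := hM haM
                have h1 : u = w := huniq' u (by rw [← hva]; exact huv.symm)
                have h2 : b = w := huniq' b hab
                exact huab (by rw [h1.trans h2.symm]; exact Set.mem_insert_of_mem _ rfl)
              · obtain ⟨w, hw, huniq'⟩ := hM hbM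
                have h1 : u = w := huniq' u (by rw [← hvb]; exact huv.symm)
                have h2 : a = w := huniq' a hab.symm
                exact huab (by rw [h1.trans h2.symm]; exact Set.mem_insert _ _)
            · left
              apply hM'F.2
              rw [hM', SimpleGraph.Subgraph.deleteVerts_adj]
              exact ⟨M.edge_vert huv, huab, M.edge_vert huv.symm, hvab, huv⟩
      · refine hF.sup (SimpleGraph.Subgraph.IsMatching.subgraphOfAdj hGab) ?_
        rw [hF.support_eq_verts, SimpleGraph.support_subgraphOfAdj, hFverts, hS']
        rw [Set.disjoint_right]
        intro v hv
        simp only [Set.mem_insert_iff, Set.mem_singleton_iff] at hv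
        rcases hv with rfl | rfl <;> simp
      · rw [SimpleGraph.Subgraph.verts_sup, hFverts, SimpleGraph.subgraphOfAdj_verts, hS']
        ext v
        simp only [Set.mem_union, Set.mem_compl_iff, Set.mem_insert_iff, Set.mem_singleton_iff]
        constructor
        · rintro (hv | rfl | rfl)
          · exact fun hvS => hv (Or.inr (Or.inr hvS))
          · exact haS
          · exact hbS
        · intro hv
          by_cases hva : v = a
          · right; left; exact hva
          · by_cases hvb : v = b
            · right; right; exact hvb
            · left
              rintro (h | h | h)
              · exact hva h
              · exact hvb h
              · exact hv h
end

section
/- If G is (n,k)-extendable with n ≥ 2, then G is (n−2, k)-extendable. -/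
/-- For a matching, the number of vertices is twice the number of edges. -/
lemma SimpleGraph.Subgraph.IsMatching.ncard_verts_eq_two_mul {V : Type*} [Finite V]
    {G : SimpleGraph V} {M : G.Subgraph} (h : M.IsMatching) :
    M.verts.ncard = 2 * M.edgeSet.ncard := by
  classical
  have hmem : ∀ e : Sym2 V, e ∈ M.edgeSet → M.Adj (Quot.out e).1 (Quot.out e).2 := by
    intro e he
    have h1 : s((Quot.out e).1, (Quot.out e).2) = e := Quot.out_eq e
    rwa [← h1] at he
  let f : M.edgeSet × Bool → M.verts := fun p =>
    ⟨if p.2 then (Quot.out (p.1 : Sym2 V)).1 else (Quot.out (p.1 : Sym2 V)).2, by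
      rcases p with ⟨⟨e, he⟩, b⟩
      have := hmem e he
      cases b
      · exact M.edge_vert this.symm
      · exact M.edge_vert this⟩
  have key : ∀ (e : Sym2 V), e ∈ M.edgeSet → ∀ (v : V),
      (v = (Quot.out e).1 ∨ v = (Quot.out e).2) →
      ∀ w, M.Adj v w → e = s(v, w) := by
    intro e he v hv w hw
    have hadj := hmem e he
    have h0 : e = s((Quot.out e).1, (Quot.out e).2) := (Quot.out_eq e).symm
    obtain ⟨w', hw', huniq⟩ := h (M.edge_vert hw)
    rcases hv with rfl | rfl
    · conv_lhs => rw [h0]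
      rw [huniq _ hadj, ← huniq _ hw]
    · conv_lhs => rw [h0]
      rw [huniq _ hadj.symm, ← huniq _ hw]
      exact Sym2.eq_swap
  have hinj : Function.Injective f := by
    rintro ⟨⟨e, he⟩, b⟩ ⟨⟨e', he'⟩, b'⟩ hfe
    have hv : (if b then (Quot.out e).1 else (Quot.out e).2)
        = (if b' then (Quot.out e').1 else (Quot.out e').2) := congrArg Subtype.val hfe
    have hadj := hmem e he
    have hne : (Quot.out e).1 ≠ (Quot.out e).2 := (M.adj_sub hadj).ne
    obtain ⟨w, hw⟩ : ∃ w, M.Adj (if b then (Quot.out e).1 else (Quot.out e).2) w := by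
      cases b
      · exact ⟨_, hadj.symm⟩
      · exact ⟨_, hadj⟩
    have he1 : e = s(if b then (Quot.out e).1 else (Quot.out e).2, w) :=
      key e he _ (by cases b <;> simp) w hw
    have h1' : (if b then (Quot.out e).1 else (Quot.out e).2) = (Quot.out e').1 ∨
        (if b then (Quot.out e).1 else (Quot.out e).2) = (Quot.out e').2 := by
      cases b' <;> simp only [if_true, if_false, Bool.false_eq_true] at hv
      · exact Or.inr hv
      · exact Or.inl hv
    have he2 : e' = s(if b then (Quot.out e).1 else (Quot.out e).2, w) :=
      key e' he' _ h1' w hw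
    have hee : e = e' := he1.trans he2.symm
    subst hee
    have hb : b = b' := by
      cases b <;> cases b' <;>
        simp only [if_true, if_false, Bool.false_eq_true] at hv <;> first
        | rfl
        | exact absurd hv hne.symm
        | exact absurd hv hne
    subst hb
    rfl
  have hsurj : Function.Surjective f := by
    rintro ⟨v, hv⟩
    obtain ⟨w, hw, -⟩ := h hv
    have he : s(v, w) ∈ M.edgeSet := hw
    have h1 : s((Quot.out (s(v, w) : Sym2 V)).1, (Quot.out (s(v, w) : Sym2 V)).2) = s(v, w) :=
      Quot.out_eq (s(v, w) : Sym2 V)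
    rcases (Sym2.mk_eq_mk_iff (p := Quot.out (s(v, w) : Sym2 V)) (q := (v, w))).mp h1 with h1 | h1
    · exact ⟨⟨⟨s(v, w), he⟩, true⟩, Subtype.ext (by simp [f, h1])⟩
    · have h1 : (Quot.out (s(v, w) : Sym2 V)) = (w, v) := by simpa using h1
      exact ⟨⟨⟨s(v, w), he⟩, false⟩, Subtype.ext (by simp [f, h1])⟩
  have hcard := Nat.card_eq_of_bijective f ⟨hinj, hsurj⟩
  rw [Nat.card_prod, Nat.card_coe_set_eq, Nat.card_coe_set_eq] at hcard
  simp only [Nat.card_eq_fintype_card, Fintype.card_bool] at hcard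
  omega

/-- If `G` is `(n,k)`-extendable with `n ≥ 2`, then `G` is `(n-2, k)`-extendable. -/
theorem nkExtendable_sub_two {V : Type*} [Finite V]
    (G : SimpleGraph V) (n k : ℕ) (hn : 2 ≤ n)
    (h : G.NKExtendable n k) :
    G.NKExtendable (n - 2) k := by
  classical
  obtain ⟨hcard, heven, hext⟩ := h
  have hV : n + 2 * k + 2 ≤ Nat.card V := by omega
  have pick : ∀ T : Set V, T.ncard + 2 ≤ Nat.card V → ∃ u v : V, u ≠ v ∧ u ∉ T ∧ v ∉ T := by
    intro T hT
    have hc := Set.ncard_add_ncard_compl T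
    have h1 : 1 < Tᶜ.ncard := by omega
    obtain ⟨u, hu, v, hv, huv⟩ := (Set.one_lt_ncard (Set.toFinite _)).mp h1
    exact ⟨u, v, huv, hu, hv⟩
  have insert2 : ∀ (T : Set V) (u v : V), u ≠ v → u ∉ T → v ∉ T →
      (insert u (insert v T)).ncard = T.ncard + 2 := by
    intro T u v huv hu hv
    rw [Set.ncard_insert_of_notMem (by simp [hu, huv]) (Set.toFinite _),
      Set.ncard_insert_of_notMem hv (Set.toFinite _)]
  refine ⟨by omega, ?_, ?_⟩
  · obtain ⟨r, hr⟩ := heven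
    exact ⟨r + 1, by omega⟩
  intro S hS
  constructor
  · -- existence of a k-matching avoiding S
    obtain ⟨u, v, huv, hu, hv⟩ := pick S (by omega)
    have hS1 : (insert u (insert v S)).ncard = n := by rw [insert2 S u v huv hu hv]; omega
    obtain ⟨⟨M, hM, hMd, hMc⟩, -⟩ := hext _ hS1
    exact ⟨M, hM, hMd.mono_right (by intro x hx; simp [hx]), hMc⟩
  · intro M hM hMd hMc
    have hMv : M.verts.ncard = 2 * k := by rw [hM.ncard_verts_eq_two_mul, hMc]
    have hSM : (S ∪ M.verts).ncard + 2 ≤ Nat.card V := by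
      have := Set.ncard_union_le S M.verts
      omega
    obtain ⟨u, v, huv, hu, hv⟩ := pick _ hSM
    simp only [Set.mem_union, not_or] at hu hv
    have hS1 : (insert u (insert v S)).ncard = n := by
      rw [insert2 S u v huv hu.1 hv.1]; omega
    have hMd1 : Disjoint M.verts (insert u (insert v S)) := by
      rw [Set.disjoint_right]
      intro x hx
      rcases hx with rfl | rfl | hx
      · exact hu.2
      · exact hv.2
      · exact (Set.disjoint_right.mp hMd hx)
    obtain ⟨F₁, hMF₁, hF₁m, hF₁v⟩ := (hext _ hS1).2 M hM hMd1 hMc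
    -- F₁ has more than k edges
    have hF₁verts : F₁.verts.ncard = Nat.card V - n := by
      rw [hF₁v]
      have := Set.ncard_add_ncard_compl (insert u (insert v S))
      omega
    have hF₁e : k < F₁.edgeSet.ncard := by
      have h2 := hF₁m.ncard_verts_eq_two_mul
      omega
    have hMe : M.edgeSet.ncard < F₁.edgeSet.ncard := by omega
    obtain ⟨e, heF, heM⟩ := Set.exists_mem_notMem_of_ncard_lt_ncard hMe (Set.toFinite _)
    obtain ⟨a, b, rfl⟩ : ∃ a b, e = s(a, b) :=
      ⟨(Quot.out e).1, (Quot.out e).2, (Quot.out_eq e).symm⟩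
    have hab : F₁.Adj a b := heF
    have hGab : G.Adj a b := F₁.adj_sub hab
    have haM : a ∉ M.verts := by
      intro haM
      obtain ⟨w, hw, -⟩ := hM haM
      obtain ⟨w', hw', huniq⟩ := hF₁m (F₁.edge_vert hab)
      have h1 : w = w' := huniq _ (hMF₁.2 hw)
      have h2 : b = w' := huniq _ hab
      exact heM (by rw [show b = w from h2.trans h1.symm]; exact hw)
    have hbM : b ∉ M.verts := by
      intro hbM
      obtain ⟨w, hw, -⟩ := hM hbM
      obtain ⟨w', hw', huniq⟩ := hF₁m (F₁.edge_vert hab.symm)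
      have h1 : w = w' := huniq _ (hMF₁.2 hw)
      have h2 : a = w' := huniq _ hab.symm
      exact heM (by rw [show a = w from h2.trans h1.symm]; exact hw.symm)
    have haS : a ∉ S := by
      have : a ∈ F₁.verts := F₁.edge_vert hab
      rw [hF₁v] at this
      exact fun hx => this (by simp [hx])
    have hbS : b ∉ S := by
      have : b ∈ F₁.verts := F₁.edge_vert hab.symm
      rw [hF₁v] at this
      exact fun hx => this (by simp [hx])
    have hS2 : (insert a (insert b S)).ncard = n := by
      rw [insert2 S a b hGab.ne haS hbS]; omega
    have hMd2 : Disjoint M.verts (insert a (insert b S)) := by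
      rw [Set.disjoint_right]
      intro x hx
      rcases hx with rfl | rfl | hx
      · exact haM
      · exact hbM
      · exact (Set.disjoint_right.mp hMd hx)
    obtain ⟨F₂, hMF₂, hF₂m, hF₂v⟩ := (hext _ hS2).2 M hM hMd2 hMc
    refine ⟨F₂ ⊔ G.subgraphOfAdj hGab, le_trans hMF₂ le_sup_left, ?_, ?_⟩
    · refine hF₂m.sup (SimpleGraph.Subgraph.IsMatching.subgraphOfAdj hGab) ?_
      rw [hF₂m.support_eq_verts,
        (SimpleGraph.Subgraph.IsMatching.subgraphOfAdj hGab).support_eq_verts,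
        hF₂v, SimpleGraph.subgraphOfAdj_verts]
      rw [Set.disjoint_right]
      intro x hx
      simp only [Set.mem_compl_iff, not_not]
      rcases hx with rfl | rfl <;> simp
    · simp only [SimpleGraph.Subgraph.verts_sup, hF₂v, SimpleGraph.subgraphOfAdj_verts]
      ext x
      by_cases hxa : x = a <;> by_cases hxb : x = b <;>
        simp [hxa, hxb, haS, hbS]
end

section
/- If G is (n,k)-extendable with k ≥ 1, then G is (n, k−1)-extendable. -/
/-!
A `(k-1)`-matching is obtained from a `k`-matching by deleting an edge. For the extension property,
let `M` be a `(k-1)`-matching of `G - S`; it suffices to find an edge of `G - S` avoiding `V(M)`,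
since adding it gives a `k`-matching. Take a perfect matching `F` of `G - S` and a vertex `u` of
`G - S` outside `V(M)`: switching `M` along the `F`/`M`-alternating path from `u` gives a
`k`-matching `W` with `V(M) ⊆ V(W)`. As `G - S` has at least `2k + 2` vertices, `W` extends to a
perfect matching of `G - S`, which matches a vertex outside `V(W)` to another one.
-/

open Set SimpleGraph Subgraph

namespace SimpleGraph.Subgraph

variable {V : Type*} {G : SimpleGraph V} {M N F W : G.Subgraph} {u v x y : V}

lemma IsMatching.ncard_verts [Finite V] (hM : M.IsMatching) :
    M.verts.ncard = 2 * M.edgeSet.ncard := by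
  have : Fintype M.edgeSet := Fintype.ofFinite _
  rw [← Nat.card_coe_set_eq, ← Nat.card_coe_set_eq M.edgeSet,
    ← Nat.card_congr (Equiv.sigmaFiberEquiv hM.toEdge), Nat.card_sigma,
    Nat.card_eq_fintype_card, ← Finset.card_univ, mul_comm, ← smul_eq_mul, ← Finset.sum_const]
  refine Finset.sum_congr rfl fun ⟨e, he⟩ _ => ?_
  induction e using Sym2.ind with
  | _ u v =>
    change Nat.card ↥(hM.toEdge ⁻¹' {⟨s(u, v), he⟩}) = 2
    rw [hM.toEdge_preimage_singleton he, Nat.card_coe_set_eq,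
      ncard_pair (by simpa using (M.adj_sub he).ne)]

lemma IsMatching.sup_subgraphOfAdj (hM : M.IsMatching) (huv : G.Adj u v) (hu : u ∉ M.verts)
    (hv : v ∉ M.verts) : (M ⊔ G.subgraphOfAdj huv).IsMatching := by
  refine hM.sup (.subgraphOfAdj huv) ?_
  rw [hM.support_eq_verts, (IsMatching.subgraphOfAdj huv).support_eq_verts,
    subgraphOfAdj_verts, disjoint_insert_right, disjoint_singleton_right]
  exact ⟨hu, hv⟩

lemma ncard_edgeSet_sup_subgraphOfAdj [Finite V] (huv : G.Adj u v) (hu : u ∉ M.verts) :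
    (M ⊔ G.subgraphOfAdj huv).edgeSet.ncard = M.edgeSet.ncard + 1 := by
  rw [edgeSet_sup, edgeSet_subgraphOfAdj, union_singleton,
    ncard_insert_of_notMem fun h => hu (M.mem_verts_of_mem_edge h (Sym2.mem_mk_left u v))]

lemma IsMatching.deleteVerts_pair (hM : M.IsMatching) (hxy : M.Adj x y) :
    (M.deleteVerts {x, y}).IsMatching := by
  rintro v ⟨hv, hvxy⟩
  obtain ⟨w, hvw, hw⟩ := hM hv
  have hwxy : w ∉ ({x, y} : Set V) := by
    rintro (rfl | rfl)
    · exact hvxy (.inr (hM.eq_of_adj_left hvw.symm hxy))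
    · exact hvxy (.inl (hM.eq_of_adj_right hvw hxy))
  exact ⟨w, deleteVerts_adj.mpr ⟨hv, hvxy, hvw.snd_mem, hwxy, hvw⟩,
    fun z hz => hw z (deleteVerts_adj.mp hz).2.2.2.2⟩

lemma IsMatching.mem_verts_of_le_of_adj (hW : W.IsMatching) (hF : F.IsMatching) (hWF : W ≤ F)
    (huv : F.Adj u v) (hv : v ∈ W.verts) : u ∈ W.verts := by
  obtain ⟨w, hvw, -⟩ := hW hv
  obtain rfl := hF.eq_of_adj_left (hWF.2 hvw) huv.symm
  exact hvw.snd_mem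

/-- `W` is `N` switched along the path that leaves `u` by its `F`-edge and alternates between
`F`- and `N`-edges until it leaves `N.verts` at `u'`. Recording the `F`-partner `w` of `u'` is
what lets the induction rule out that the path ends at `u` or at the `F`-partner of `u`. -/
lemma IsMatching.exists_augment [Finite V] (hF : F.IsMatching) (hN : N.IsMatching)
    (hNF : N.verts ⊆ F.verts) (hu : u ∈ F.verts) (huN : u ∉ N.verts) :
    ∃ W : G.Subgraph, ∃ u' ∉ N.verts, u' ≠ u ∧
      (∃ w ∈ insert u N.verts, F.Adj w u') ∧
      W.IsMatching ∧ W.verts = insert u (insert u' N.verts) := by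
  induction hc : N.verts.ncard using Nat.strong_induction_on generalizing N u with
  | _ m ih =>
  obtain ⟨x, hux, -⟩ := hF hu
  have hGux := F.adj_sub hux
  by_cases hxN : x ∉ N.verts
  · refine ⟨N ⊔ G.subgraphOfAdj hGux, x, hxN, hGux.ne.symm, ⟨u, mem_insert _ _, hux⟩,
      hN.sup_subgraphOfAdj hGux huN hxN, ?_⟩
    rw [verts_sup, subgraphOfAdj_verts, union_comm, insert_union, singleton_union]
  push Not at hxN
  obtain ⟨y, hxy, -⟩ := hN hxN
  have hyN := hxy.snd_mem
  have hlt : (N.deleteVerts {x, y}).verts.ncard < m := by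
    rw [← hc]
    exact ncard_lt_ncard ⟨sdiff_subset, fun h => (h hyN).2 (.inr rfl)⟩
  obtain ⟨W', u', hu'N', hu'y, ⟨w, hw, hwu'⟩, hW', hW'v⟩ :=
    ih _ hlt (hN.deleteVerts_pair hxy) (sdiff_subset.trans hNF) (hNF hyN)
      (fun h => h.2 (.inr rfl)) rfl
  simp only [deleteVerts_verts, mem_insert_iff, mem_sdiff] at hw hu'N' hW'v
  clear ih
  have hxy' : x ≠ y := (N.adj_sub hxy).ne
  have hwN : w ∈ N.verts := by rcases hw with rfl | hw; exacts [hyN, hw.1]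
  have hu'x : u' ≠ x := by
    rintro rfl
    exact huN (hF.eq_of_adj_right hwu' hux ▸ hwN)
  have hu'u : u' ≠ u := by
    rintro rfl
    obtain rfl := hF.eq_of_adj_left hux hwu'.symm
    rcases hw with h | h
    exacts [hxy' h, h.2 (.inl rfl)]
  have huy : u ≠ y := fun h => huN (h ▸ hyN)
  refine ⟨W' ⊔ G.subgraphOfAdj hGux, u', by grind, hu'u, ⟨w, .inr hwN, hwu'⟩,
    hW'.sup_subgraphOfAdj hGux (by grind) (by grind), ?_⟩
  ext z
  simp only [verts_sup, hW'v, subgraphOfAdj_verts]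
  grind

lemma IsMatching.exists_le_ncard_edgeSet_eq_sub_one [Finite V] (hM : M.IsMatching)
    (hne : M.edgeSet.Nonempty) :
    ∃ M' ≤ M, M'.IsMatching ∧ M'.edgeSet.ncard = M.edgeSet.ncard - 1 := by
  obtain ⟨e, he⟩ := hne
  induction e using Sym2.ind with
  | _ x y =>
  have hxy : M.Adj x y := he
  have hM' := hM.deleteVerts_pair hxy
  refine ⟨_, deleteVerts_le, hM', ?_⟩
  have hcard := hM'.ncard_verts
  rw [deleteVerts_verts, ncard_sdiff (insert_subset hxy.fst_mem (singleton_subset_iff.mpr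
    hxy.snd_mem)), ncard_pair (G.ne_of_adj (M.adj_sub hxy)), hM.ncard_verts] at hcard
  have : M.edgeSet.ncard ≠ 0 := ncard_ne_zero_of_mem he
  omega

end SimpleGraph.Subgraph

namespace SimpleGraph

variable {V : Type*} {G : SimpleGraph V}

lemma exists_adj_sdiff_verts_of_forall_extend [Finite V] {T : Set V} {F M : G.Subgraph}
    (hF : F.IsMatching) (hFT : F.verts = T) (hM : M.IsMatching) (hMT : M.verts ⊆ T)
    (hT : 2 * M.edgeSet.ncard + 3 ≤ T.ncard)
    (hext : ∀ W : G.Subgraph, W.IsMatching → W.verts ⊆ T →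
      W.edgeSet.ncard = M.edgeSet.ncard + 1 →
        ∃ F' : G.Subgraph, W ≤ F' ∧ F'.IsMatching ∧ F'.verts = T) :
    ∃ a ∈ T \ M.verts, ∃ b ∈ T \ M.verts, G.Adj a b := by
  have hfree : 3 ≤ (T \ M.verts).ncard := by
    rw [ncard_sdiff hMT, hM.ncard_verts]
    omega
  obtain ⟨u, huT, huM⟩ : (T \ M.verts).Nonempty := nonempty_of_ncard_ne_zero (by omega)
  obtain ⟨W, u', hu'M, hu'u, ⟨w, -, hwu'⟩, hW, hWv⟩ :=
    hF.exists_augment hM (hFT ▸ hMT) (hFT ▸ huT) huM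
  have hu'T : u' ∈ T := hFT ▸ hwu'.snd_mem
  have hWT : W.verts ⊆ T := hWv ▸ insert_subset huT (insert_subset hu'T hMT)
  have hWk : W.edgeSet.ncard = M.edgeSet.ncard + 1 := by
    have hcard := hW.ncard_verts
    rw [hWv, ncard_insert_of_notMem (by simp [hu'u.symm, huM]), ncard_insert_of_notMem hu'M,
      hM.ncard_verts] at hcard
    omega
  obtain ⟨F', hWF', hF', hF'T⟩ := hext W hW hWT hWk
  obtain ⟨t, ⟨htT, htM⟩, htuu'⟩ : ((T \ M.verts) \ {u, u'}).Nonempty := by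
    refine nonempty_of_ncard_ne_zero ?_
    have := le_ncard_sdiff {u, u'} (T \ M.verts)
    have := (ncard_insert_le u {u'}).trans_eq (by rw [ncard_singleton])
    omega
  have htW : t ∉ W.verts := by
    rw [hWv]
    rintro (rfl | rfl | h)
    exacts [htuu' (.inl rfl), htuu' (.inr rfl), htM h]
  obtain ⟨t', htt', -⟩ := hF' (hF'T ▸ htT)
  have ht'W : t' ∉ W.verts := fun h => htW (hW.mem_verts_of_le_of_adj hF' hWF' htt' h)
  have ht'M : t' ∉ M.verts := fun h => ht'W (hWv ▸ .inr (.inr h))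
  exact ⟨t, ⟨htT, htM⟩, t', ⟨hF'T ▸ htt'.snd_mem, ht'M⟩, F'.adj_sub htt'⟩

end SimpleGraph

/-- If `G` is `(n,k)`-extendable with `k ≥ 1`, then `G` is `(n, k-1)`-extendable. -/
theorem nkExtendable_k_sub_one {V : Type*} [Finite V]
    (G : SimpleGraph V) (n k : ℕ) (hk : 1 ≤ k)
    (h : G.NKExtendable n k) :
    G.NKExtendable n (k - 1) := by
  obtain ⟨hcard, heven, hS⟩ := h
  refine ⟨by omega, heven, fun S hSn => ?_⟩
  obtain ⟨⟨M₀, hM₀, hM₀S, hM₀k⟩, hext⟩ := hS S hSn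
  refine ⟨?_, fun M hM hMS hMk => ?_⟩
  · obtain ⟨M', hM'M₀, hM', hM'k⟩ :=
      hM₀.exists_le_ncard_edgeSet_eq_sub_one (nonempty_of_ncard_ne_zero (by omega))
    exact ⟨M', hM', hM₀S.mono_left hM'M₀.1, hM₀k ▸ hM'k⟩
  obtain ⟨F, -, hF, hFS⟩ := hext M₀ hM₀ hM₀S hM₀k
  simp only [← subset_compl_iff_disjoint_right] at hext hMS
  have hSc : Sᶜ.ncard = Nat.card V - n := by
    rw [← hSn, ← ncard_add_ncard_compl S, Nat.add_sub_cancel_left]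
  obtain ⟨a, ⟨haS, haM⟩, b, ⟨hbS, hbM⟩, hab⟩ :=
    exists_adj_sdiff_verts_of_forall_extend hF hFS hM hMS (by omega)
      (by rwa [hMk, Nat.sub_add_cancel hk])
  obtain ⟨F', hle, hF', hF'S⟩ := hext (M ⊔ G.subgraphOfAdj hab)
    (hM.sup_subgraphOfAdj hab haM hbM)
    (by
      rw [verts_sup, subgraphOfAdj_verts]
      exact union_subset hMS (insert_subset haS (singleton_subset_iff.mpr hbS)))
    (by rw [ncard_edgeSet_sup_subgraphOfAdj hab haM]; omega)
  exact ⟨F', le_sup_left.trans hle, hF', hF'S⟩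
end

section
/- Suppose G is (n,k)-extendable, S is a set of n vertices, M is a k-matching of G − S, and S' ⊆ V(G) \ (S ∪ V(M)) satisfies o(G − S − V(M) − S') ≥ |S'| + 2, where o denotes the number of odd components. Then in fact o(G − S − V(M) − S') = |S'| + 2 is impossible to exceed; that is, o(G − S − V(M) − S') ≤ |S'| + 2 whenever n ≥ 2. -/
/-- The number of odd components of `G`. -/
noncomputable def SimpleGraph.numOddComponents {V : Type*} (G : SimpleGraph V) : ℕ :=
  Nat.card {c : G.ConnectedComponent // Odd (Nat.card c.supp)}

/-- If `G` is `(n,k)`-extendable with `n ≥ 2`, `S` is an `n`-set, `M` is a `k`-matching of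
`G - S`, and `S' ⊆ V(G) \ (S ∪ V(M))`, then `o(G - S - V(M) - S') ≤ |S'| + 2`. -/
theorem oddComponents_bound_of_nkExtendable {V : Type*} [Finite V]
    (G : SimpleGraph V) (n k : ℕ) (hn : 2 ≤ n)
    (h : G.NKExtendable n k)
    (S : Set V) (hS : S.ncard = n)
    (M : G.Subgraph) (hM : M.IsMatching) (hMS : Disjoint M.verts S)
    (hMk : M.edgeSet.ncard = k)
    (S' : Set V) (hS' : S' ⊆ (S ∪ M.verts)ᶜ) :
    (G.induce ((S ∪ M.verts ∪ S')ᶜ : Set V)).numOddComponents ≤ S'.ncard + 2 := by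
  classical
  obtain ⟨F, hMF, hF, hFverts⟩ := (h.2.2 S hS).2 M hM hMS hMk
  set W : Set V := (S ∪ M.verts ∪ S')ᶜ with hW
  have hWmem : ∀ x : V, x ∈ W ↔ x ∉ S ∧ x ∉ M.verts ∧ x ∉ S' := by
    intro x; simp only [hW, Set.mem_compl_iff, Set.mem_union, not_or]; tauto
  have key : ∀ c : (G.induce W).ConnectedComponent, Odd (Nat.card c.supp) →
      ∃ w ∈ S', ∃ v : W, F.Adj v w ∧ v ∈ c.supp := by
    intro c hodd
    by_contra! hcon
    have hmatch : (F.induce (Subtype.val '' c.supp)).IsMatching := by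
      rintro v ⟨v₀, hv₀, rfl⟩
      have hvW : (v₀ : V) ∈ W := v₀.2
      have hvF : (v₀ : V) ∈ F.verts := by
        rw [hFverts]; exact ((hWmem _).1 hvW).1
      obtain ⟨w, hw, huniq⟩ := hF hvF
      have hwS : w ∉ S := by
        have : w ∈ F.verts := F.edge_vert hw.symm
        rw [hFverts] at this; exact this
      have hwM : w ∉ M.verts := by
        intro hwM
        obtain ⟨u, hu, -⟩ := hM hwM
        have h1 : F.Adj w (v₀ : V) := hw.symm
        have h2 : F.Adj w u := hMF.2 hu
        obtain ⟨u', -, huniq'⟩ := hF (F.edge_vert h1)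
        have : (v₀ : V) = u := (huniq' _ h1).trans (huniq' _ h2).symm
        exact ((hWmem _).1 hvW).2.1 (this ▸ M.edge_vert hu.symm)
      have hwS' : w ∉ S' := fun hws' => hcon w hws' v₀ hw hv₀
      have hwW : w ∈ W := (hWmem w).2 ⟨hwS, hwM, hwS'⟩
      have hwsupp : (⟨w, hwW⟩ : W) ∈ c.supp := by
        rw [SimpleGraph.ConnectedComponent.mem_supp_iff] at hv₀ ⊢
        rw [← hv₀]
        apply SimpleGraph.ConnectedComponent.connectedComponentMk_eq_of_adj
        show (G.induce W).Adj ⟨w, hwW⟩ v₀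
        simp only [SimpleGraph.comap_adj, Function.Embedding.coe_subtype]
        exact (F.adj_sub hw).symm
      refine ⟨w, ⟨⟨v₀, hv₀, rfl⟩, ⟨⟨w, hwW⟩, hwsupp, rfl⟩, hw⟩, ?_⟩
      rintro y ⟨-, -, hy⟩
      exact huniq y hy
    have heven : Even (Nat.card (Subtype.val '' c.supp : Set V)) := by
      haveI : Fintype ((F.induce (Subtype.val '' c.supp)).verts) := Fintype.ofFinite _
      have h2 := hmatch.even_card
      rw [Set.toFinset_card, ← Nat.card_eq_fintype_card, Nat.card_coe_set_eq] at h2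
      rw [Nat.card_coe_set_eq]
      exact h2
    rw [Nat.card_coe_set_eq, Set.ncard_image_of_injective _ Subtype.val_injective,
      ← Nat.card_coe_set_eq] at heven
    exact (Nat.not_even_iff_odd.2 hodd) heven
  choose w hwS' v hadj hsupp using
    fun c : {c : (G.induce W).ConnectedComponent // Odd (Nat.card c.supp)} => key c c.2
  have hinj : Function.Injective (fun c => (⟨w c, hwS' c⟩ : S')) := by
    intro c1 c2 heq
    have hweq : w c1 = w c2 := congrArg Subtype.val heq
    have h1 : F.Adj (w c1) (v c1) := (hadj c1).symm
    have h2 : F.Adj (w c1) (v c2) := by rw [hweq]; exact (hadj c2).symm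
    obtain ⟨u, -, huniq⟩ := hF (F.edge_vert h1)
    have hveq : v c1 = v c2 := Subtype.val_injective ((huniq _ h1).trans (huniq _ h2).symm)
    have hs1 := hsupp c1
    have hs2 := hsupp c2
    rw [SimpleGraph.ConnectedComponent.mem_supp_iff] at hs1 hs2
    exact Subtype.ext (hs1 ▸ hveq ▸ hs2)
  have hle : (G.induce W).numOddComponents ≤ S'.ncard := by
    rw [SimpleGraph.numOddComponents]
    calc Nat.card {c : (G.induce W).ConnectedComponent // Odd (Nat.card c.supp)}
        ≤ Nat.card S' := Nat.card_le_card_of_injective _ hinj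
      _ = S'.ncard := Nat.card_coe_set_eq S'
  omega
end
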